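/- Calderón–Zygmund smoothness estimate with exponent δ = 1/2 for the random square-function kernel: There is a constant C = C(N) such that whenever x, x₀, y ∈ ℝ^N satisfy |y−x₀| ≥ 2|x−x₀| > 0, one has E_ω Σ_{k∈ℤ} |Δ_k^{D(ω)} δ_y(x) − Δ_k^{D(ω)} δ_y(x₀)|² ≤ C |x−x₀| |x₀−y|^{−2N−1}, and also (for the transposed kernel) E_ω Σ_{k∈ℤ} |Δ_k^{D(ω)} δ_x(y) − Δ_k^{D(ω)} δ_{x₀}(y)|² ≤ C |x−x₀| |x₀−y|^{−2N−1}. -/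

import Mathlib

open MeasureTheory Filter Topology
open scoped ENNReal

noncomputable section

namespace Treil

/-- The cube of sidelength `2^k` of the dyadic lattice `t + 𝒟₀` that contains `x`. -/
def dcube {N : ℕ} (t : Fin N → ℝ) (k : ℤ) (x : Fin N → ℝ) : Set (Fin N → ℝ) :=
  {y | ∀ i, ⌊(y i - t i) / (2 : ℝ) ^ k⌋ = ⌊(x i - t i) / (2 : ℝ) ^ k⌋}

/-- The averaging operator `E_k` over the cubes of sidelength `2^k` of the (generalized)
dyadic lattice whose layer at scale `2^k` has offset `c k`. -/
def avg {N : ℕ} (c : ℤ → Fin N → ℝ) (k : ℤ) (f : (Fin N → ℝ) → ℝ) (x : Fin N → ℝ) : ℝ :=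
  (∫ y in dcube (c k) k x, f y) / ((2 : ℝ) ^ k) ^ (N : ℕ)

/-- The martingale difference `Δ_k = E_{k-1} - E_k`. -/
def mdiff {N : ℕ} (c : ℤ → Fin N → ℝ) (k : ℤ) (f : (Fin N → ℝ) → ℝ) (x : Fin N → ℝ) : ℝ :=
  avg c (k - 1) f x - avg c k f x

/-- The square of the dyadic square function, `|S_𝒟 f (x)|² = ∑_k |Δ_k f (x)|²`,
with values in `[0,∞]`. -/
def Ssq {N : ℕ} (c : ℤ → Fin N → ℝ) (f : (Fin N → ℝ) → ℝ) (x : Fin N → ℝ) : ℝ≥0∞ :=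
  ∑' k : ℤ, ENNReal.ofReal ((mdiff c k f x) ^ 2)

/-- The offset (at scale `2^k`) of the random dyadic lattice on `ℝ` built from the uniform
shift `u ∈ [0,1)` and the fair signs `ξ_j`, `j ≥ 1`, encoded as the binary digits of
`v ∈ [0,1)` (`ξ_j = -1` iff `⌊v 2^j⌋` is odd); the interval `I_0 = [u-1, u)` belongs to the
lattice, and `I_k` is obtained from `I_{k-1}` by adjoining the right neighbour if `ξ_k = +1`
and the left neighbour if `ξ_k = -1`. -/
def randOffset1 (u v : ℝ) (k : ℤ) : ℝ :=
  u - 1 - ∑ j ∈ Finset.range k.toNat, (if ⌊v * 2 ^ (j + 1)⌋ % 2 = 1 then (2 : ℝ) ^ j else 0)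

/-- The sample space for the random dyadic lattice in `ℝ^N`: each of the `N` independent
coordinate lattices is driven by a pair (uniform shift, digit-encoded fair signs). -/
abbrev RSpace (N : ℕ) := Fin N → ℝ × ℝ

/-- The probability measure of the random dyadic lattice in `ℝ^N`. -/
def randMeasure (N : ℕ) : Measure (RSpace N) :=
  Measure.pi fun _ =>
    (volume.restrict (Set.Ico (0 : ℝ) 1)).prod (volume.restrict (Set.Ico (0 : ℝ) 1))

/-- The per-scale offsets of the random dyadic lattice `𝒟(ω)` in `ℝ^N`. -/
def randOffset {N : ℕ} (ω : RSpace N) (k : ℤ) : Fin N → ℝ :=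
  fun i => randOffset1 (ω i).1 (ω i).2 k

/-- An (axis-parallel, half-open) cube in `ℝ^N`. -/
def IsPCube {N : ℕ} (Q : Set (Fin N → ℝ)) : Prop :=
  ∃ (a : Fin N → ℝ) (l : ℝ), 0 < l ∧ Q = Set.univ.pi fun i => Set.Ico (a i) (a i + l)

/-- An `H¹`-atom: supported in a cube `Q`, bounded by `|Q|⁻¹`, with zero mean. -/
def IsAtom {N : ℕ} (a : (Fin N → ℝ) → ℝ) : Prop :=
  ∃ Q : Set (Fin N → ℝ), IsPCube Q ∧ (∀ x, x ∉ Q → a x = 0) ∧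
    (∀ x, |a x| ≤ ((volume Q).toReal)⁻¹) ∧ (∫ x, a x) = 0

/-- The atomic `H¹(ℝ^N)` norm: the infimum of `∑ |λ_j|` over all decompositions
`f = ∑ λ_j a_j` converging in `L¹`, with atoms `a_j`. -/
def H1norm {N : ℕ} (f : (Fin N → ℝ) → ℝ) : ℝ≥0∞ :=
  ⨅ (lam : ℕ → ℝ) (a : ℕ → (Fin N → ℝ) → ℝ) (_ : ∀ j, IsAtom (a j))
    (_ : Tendsto (fun m => ∫ x, |f x - ∑ j ∈ Finset.range m, lam j * a j x|) atTop (𝓝 0)),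
    ∑' j, ENNReal.ofReal |lam j|
/-- The martingale difference of the unit point mass `δ_y`:
`Δ_k δ_y (x) = 1_{Q'}(y)/|Q'| - 1_Q(y)/|Q|`, where `Q` is the cube of sidelength `2^k`
containing `x` and `Q'` its child containing `x`. -/
def mdiffDelta {N : ℕ} (c : ℤ → Fin N → ℝ) (k : ℤ) (y x : Fin N → ℝ) : ℝ :=
  (dcube (c (k - 1)) (k - 1) x).indicator (fun _ => (((2 : ℝ) ^ (k - 1)) ^ (N : ℕ))⁻¹) y -
    (dcube (c k) k x).indicator (fun _ => (((2 : ℝ) ^ k) ^ (N : ℕ))⁻¹) y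

/-!
At scale `2^k` both kernel differences vanish unless the lattice at scale `2^(k-1)` separates `x`
from `x₀` (the lattices are nested), and unless `2^(k+1) ≥ |x₀ - y|`; otherwise they are
`O(2^(-kN))`. A random coordinate lattice separates two points at distance `d` at scale `2^k` with
probability `≲ d / 2^k`: for `2^k ≤ 1` it is a uniformly shifted lattice, and for `2^k > 1` the
`2^k` equally likely positions of `I_0` inside `I_k` spread the shift out. Summing
`2^(-2kN) · d / 2^k` over `2^k ≳ |x₀ - y|` gives `d |x₀ - y|^(-2N-1)`.
-/

open Set

lemma card_Icc_ceil_floor_le {α β : ℝ} (h : α ≤ β + 1) :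
    ((Finset.Icc ⌈α⌉ ⌊β⌋).card : ℝ) ≤ β - α + 1 := by
  have hcard : ((Finset.Icc ⌈α⌉ ⌊β⌋).card : ℝ) = max ((⌊β⌋ + 1 - ⌈α⌉ : ℤ) : ℝ) 0 := by
    rw [Int.card_Icc, ← Int.cast_natCast, Int.toNat_eq_max]
    push_cast
    rfl
  rw [hcard]
  refine max_le ?_ (by linarith)
  push_cast
  linarith [Int.floor_le β, Int.le_ceil α]

/-- About `1 / q` of the translates meet `[0, 1)`, each in measure at most `min d 1`. -/
lemma tsum_volume_Ioc_inter_Ico_le {c d q : ℝ} (hq : 0 < q) (hq1 : q ≤ 1) (hd : 0 ≤ d) :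
    ∑' n : ℤ, volume (Ioc (c + n * q) (c + n * q + d) ∩ Ico 0 1) ≤ ENNReal.ofReal (3 * d / q) := by
  have hsupp : ∀ n ∉ Finset.Icc ⌈(-c - d) / q⌉ ⌊(1 - c) / q⌋,
      volume (Ioc (c + n * q) (c + n * q + d) ∩ Ico 0 1) = 0 := by
    intro n hn
    by_contra hne
    obtain ⟨z, ⟨hz₁, hz₂⟩, hz₃, hz₄⟩ := nonempty_of_measure_ne_zero hne
    refine hn (Finset.mem_Icc.2 ⟨Int.ceil_le.2 ?_, Int.le_floor.2 ?_⟩)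
    · rw [div_le_iff₀ hq]; linarith
    · rw [le_div_iff₀ hq]; linarith
  have hterm : ∀ n : ℤ,
      volume (Ioc (c + n * q) (c + n * q + d) ∩ Ico 0 1) ≤ ENNReal.ofReal (min d 1) := by
    intro n
    rw [ENNReal.ofReal_min]
    refine le_min ((measure_mono inter_subset_left).trans_eq ?_)
      ((measure_mono inter_subset_right).trans_eq ?_)
    · rw [Real.volume_Ioc, add_sub_cancel_left]
    · rw [Real.volume_Ico, sub_zero, ENNReal.ofReal_one]
  have hcount : (Finset.Icc ⌈(-c - d) / q⌉ ⌊(1 - c) / q⌋).card * min d 1 ≤ 3 * d / q := by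
    have hcard := card_Icc_ceil_floor_le (α := (-c - d) / q) (β := (1 - c) / q) (by
      rw [← sub_nonneg]; field_simp; nlinarith)
    have hcard' : (1 - c) / q - (-c - d) / q + 1 ≤ (2 + d) / q := by
      rw [div_sub_div_same, div_add_one hq.ne', div_le_div_iff_of_pos_right hq]; linarith
    calc _ ≤ (2 + d) / q * min d 1 := by gcongr; exact hcard.trans hcard'
      _ ≤ 3 * d / q := by
        rw [div_mul_eq_mul_div]
        refine div_le_div_of_nonneg_right ?_ hq.le
        rcases le_total d 1 with h | h <;> simp [h] <;> nlinarith
  rw [tsum_eq_sum hsupp]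
  refine (Finset.sum_le_card_nsmul _ _ _ fun n _ => hterm n).trans ?_
  rw [nsmul_eq_mul, ← ENNReal.ofReal_natCast, ← ENNReal.ofReal_mul (by positivity)]
  exact ENNReal.ofReal_le_ofReal hcount

lemma tsum_ofReal_zpow_inv_pow_le {r : ℝ} (hr : 0 < r) {p : ℕ} (hp : 1 ≤ p) :
    ∑' k : ℤ, ENNReal.ofReal (if r ≤ 2 ^ k then ((2 : ℝ) ^ k)⁻¹ ^ p else 0) ≤
      ENNReal.ofReal (2 / r ^ p) := by
  set F : ℤ → ℝ≥0∞ := fun k => ENNReal.ofReal (if r ≤ 2 ^ k then ((2 : ℝ) ^ k)⁻¹ ^ p else 0)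
  set k₀ := Int.clog 2 r
  have hk₀ : r ≤ (2 : ℝ) ^ k₀ := by exact_mod_cast Int.self_le_zpow_clog one_lt_two r
  have hsupp : Function.support F ⊆ range fun n : ℕ => k₀ + n := by
    intro k hk
    have hrk : r ≤ (2 : ℝ) ^ k := by by_contra h; simp [F, h] at hk
    have : k₀ ≤ k := (Int.le_zpow_iff_clog_le one_lt_two hr).1 (by exact_mod_cast hrk)
    exact ⟨(k - k₀).toNat, by simp only; omega⟩
  have hterm : ∀ n : ℕ, F (k₀ + n) ≤ ENNReal.ofReal (r ^ p)⁻¹ * 2⁻¹ ^ n := by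
    intro n
    rw [← ENNReal.ofReal_ofNat 2, ← ENNReal.ofReal_inv_of_pos two_pos,
      ← ENNReal.ofReal_pow (by norm_num), ← ENNReal.ofReal_mul (by positivity)]
    refine ENNReal.ofReal_le_ofReal ?_
    split_ifs
    · rw [zpow_add₀ two_ne_zero, mul_inv, mul_pow, zpow_natCast, ← inv_pow, ← inv_pow]
      gcongr
      exact pow_le_of_le_one (by positivity) (pow_le_one₀ (by positivity) (by norm_num)) (by omega)
    · positivity
  calc ∑' k, F k = ∑' n : ℕ, F (k₀ + n) :=
        ((add_right_injective k₀).comp Nat.cast_injective |>.tsum_eq hsupp).symm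
    _ ≤ ∑' n : ℕ, ENNReal.ofReal (r ^ p)⁻¹ * 2⁻¹ ^ n := ENNReal.tsum_le_tsum hterm
    _ = ENNReal.ofReal (2 / r ^ p) := by
        rw [ENNReal.tsum_mul_left, ENNReal.tsum_geometric, ENNReal.one_sub_inv_two, inv_inv,
          div_eq_mul_inv, mul_comm, ENNReal.ofReal_mul zero_le_two, ENNReal.ofReal_ofNat]

lemma lintegral_tsum_ofReal_sq_le {Ω ι : Type*} [MeasurableSpace Ω] [Countable ι]
    (μ : Measure Ω) {f : Ω → ι → ℝ} {E : ι → Set Ω} {B : ι → ℝ}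
    (hE : ∀ ω k, ω ∉ E k → f ω k = 0) (hB : ∀ ω k, |f ω k| ≤ B k) :
    ∫⁻ ω, ∑' k, ENNReal.ofReal (f ω k ^ 2) ∂μ ≤ ∑' k, ENNReal.ofReal (B k ^ 2) * μ (E k) := by
  have hpt : ∀ ω k, ENNReal.ofReal (f ω k ^ 2) ≤
      (toMeasurable μ (E k)).indicator (fun _ => ENNReal.ofReal (B k ^ 2)) ω := by
    intro ω k
    by_cases hω : ω ∈ E k
    · rw [indicator_of_mem (subset_toMeasurable μ _ hω), ← sq_abs]
      exact ENNReal.ofReal_le_ofReal (pow_le_pow_left₀ (abs_nonneg _) (hB ω k) 2)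
    · simp [hE ω k hω]
  calc _ ≤ ∫⁻ ω, ∑' k, (toMeasurable μ (E k)).indicator (fun _ => ENNReal.ofReal (B k ^ 2)) ω ∂μ :=
        lintegral_mono fun ω => ENNReal.tsum_le_tsum (hpt ω)
    _ = ∑' k, ENNReal.ofReal (B k ^ 2) * μ (E k) := by
        rw [lintegral_tsum fun k =>
          (measurable_const.indicator (measurableSet_toMeasurable μ _)).aemeasurable]
        simp_rw [lintegral_indicator_const (measurableSet_toMeasurable μ _), measure_toMeasurable]

section Cubes

variable {N : ℕ}

lemma mem_dcube_comm {t : Fin N → ℝ} {k : ℤ} {x y : Fin N → ℝ} :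
    y ∈ dcube t k x ↔ x ∈ dcube t k y :=
  ⟨fun h i => (h i).symm, fun h i => (h i).symm⟩

lemma dcube_eq_of_mem {t : Fin N → ℝ} {k : ℤ} {x x₀ : Fin N → ℝ} (h : x₀ ∈ dcube t k x) :
    dcube t k x₀ = dcube t k x :=
  Set.ext fun _ => ⟨fun hy i => (hy i).trans (h i), fun hy i => (hy i).trans (h i).symm⟩

lemma dist_le_of_mem_dcube {t : Fin N → ℝ} {k : ℤ} {x y : Fin N → ℝ} (h : y ∈ dcube t k x) :
    dist y x ≤ 2 ^ k := by
  refine (dist_pi_le_iff (by positivity)).2 fun i => ?_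
  have hfloor := Int.abs_sub_lt_one_of_floor_eq_floor (h i)
  have hq : (0 : ℝ) < 2 ^ k := by positivity
  rw [div_sub_div_same, sub_sub_sub_cancel_right, abs_div, abs_of_pos hq, div_lt_one hq] at hfloor
  exact (Real.dist_eq _ _).trans_le hfloor.le

/-- Every cube of sidelength `2^k` is a union of cubes of sidelength `2^(k-1)`. -/
def IsNested (c : ℤ → Fin N → ℝ) : Prop :=
  ∀ k i, ∃ m : ℤ, c k i = c (k - 1) i + m * 2 ^ (k - 1)

lemma IsNested.mem_dcube {c : ℤ → Fin N → ℝ} (hc : IsNested c) {k : ℤ} {x y : Fin N → ℝ}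
    (h : y ∈ dcube (c (k - 1)) (k - 1) x) : y ∈ dcube (c k) k x := by
  intro i
  obtain ⟨m, hm⟩ := hc k i
  have hscale : ∀ z : ℝ, (z - c k i) / 2 ^ k = ((z - c (k - 1) i) / 2 ^ (k - 1) - m) / (2 : ℕ) := by
    intro z
    rw [hm, show (2 : ℝ) ^ k = 2 ^ (k - 1) * 2 by rw [← zpow_add_one₀ two_ne_zero, sub_add_cancel]]
    field_simp
    push_cast
    ring
  rw [hscale, hscale, Int.floor_div_natCast, Int.floor_div_natCast, Int.floor_sub_intCast,
    Int.floor_sub_intCast, h i]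

end Cubes

section MartingaleDifference

variable {N : ℕ} {c : ℤ → Fin N → ℝ} {k : ℤ} {x x₀ y : Fin N → ℝ}

lemma abs_mdiffDelta_le (c : ℤ → Fin N → ℝ) (k : ℤ) (y x : Fin N → ℝ) :
    |mdiffDelta c k y x| ≤ (((2 : ℝ) ^ (k - 1)) ^ N)⁻¹ := by
  have hmono : (((2 : ℝ) ^ k) ^ N)⁻¹ ≤ (((2 : ℝ) ^ (k - 1)) ^ N)⁻¹ := by
    gcongr
    · exact one_le_two
    · omega
  have hpos : ∀ j : ℤ, (0 : ℝ) ≤ (((2 : ℝ) ^ j) ^ N)⁻¹ := fun j => by positivity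
  unfold mdiffDelta
  refine abs_sub_le_of_nonneg_of_le (Set.indicator_nonneg (fun _ _ => hpos _) _) ?_
    (Set.indicator_nonneg (fun _ _ => hpos _) _) ?_ <;>
    refine Set.indicator_apply_le' (fun _ => ?_) (fun _ => hpos _)
  · exact le_rfl
  · exact hmono

lemma dist_le_of_mdiffDelta_ne_zero (h : mdiffDelta c k y x ≠ 0) : dist y x ≤ 2 ^ k := by
  by_cases hk : y ∈ dcube (c k) k x
  · exact dist_le_of_mem_dcube hk
  · have hk1 : y ∈ dcube (c (k - 1)) (k - 1) x := by
      by_contra hk1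
      simp [mdiffDelta, Set.indicator_of_notMem hk, Set.indicator_of_notMem hk1] at h
    exact (dist_le_of_mem_dcube hk1).trans (zpow_le_zpow_right₀ one_le_two (by omega))

lemma mdiffDelta_eq_of_mem_dcube_right (hc : IsNested c)
    (h : x₀ ∈ dcube (c (k - 1)) (k - 1) x) : mdiffDelta c k y x₀ = mdiffDelta c k y x := by
  rw [mdiffDelta, mdiffDelta, dcube_eq_of_mem h, dcube_eq_of_mem (hc.mem_dcube h)]

lemma mdiffDelta_eq_of_mem_dcube_left (hc : IsNested c)
    (h : x₀ ∈ dcube (c (k - 1)) (k - 1) x) : mdiffDelta c k x₀ y = mdiffDelta c k x y := by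
  have hmem : ∀ {j : ℤ}, x₀ ∈ dcube (c j) j x → (x₀ ∈ dcube (c j) j y ↔ x ∈ dcube (c j) j y) :=
    fun h => by rw [mem_dcube_comm, dcube_eq_of_mem h, mem_dcube_comm]
  classical
  simp only [mdiffDelta, Set.indicator_apply, hmem h, hmem (hc.mem_dcube h)]

def kernelBound (N : ℕ) (R : ℝ) (k : ℤ) : ℝ :=
  if R ≤ 2 ^ (k + 1) then 2 * (((2 : ℝ) ^ (k - 1)) ^ N)⁻¹ else 0

lemma dist_le_two_zpow_succ (hsep : 2 * dist x x₀ ≤ dist y x₀)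
    (h : dist y x ≤ 2 ^ k ∨ dist y x₀ ≤ 2 ^ k) : dist x₀ y ≤ 2 ^ (k + 1) := by
  rw [dist_comm, zpow_add_one₀ two_ne_zero]
  have := dist_triangle y x x₀
  have : (0 : ℝ) ≤ 2 ^ k := by positivity
  rcases h with h | h <;> linarith

lemma abs_sub_le_kernelBound {R a b : ℝ} (ha : |a| ≤ (((2 : ℝ) ^ (k - 1)) ^ N)⁻¹)
    (hb : |b| ≤ (((2 : ℝ) ^ (k - 1)) ^ N)⁻¹) (hscale : a ≠ 0 ∨ b ≠ 0 → R ≤ 2 ^ (k + 1)) :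
    |a - b| ≤ kernelBound N R k := by
  unfold kernelBound
  split_ifs with hR
  · linarith [abs_sub a b]
  · obtain ⟨rfl, rfl⟩ : a = 0 ∧ b = 0 := by tauto
    simp

lemma abs_sub_mdiffDelta_le_right (hsep : 2 * dist x x₀ ≤ dist y x₀) :
    |mdiffDelta c k y x - mdiffDelta c k y x₀| ≤ kernelBound N (dist x₀ y) k :=
  abs_sub_le_kernelBound (abs_mdiffDelta_le ..) (abs_mdiffDelta_le ..) fun h =>
    dist_le_two_zpow_succ hsep (h.imp dist_le_of_mdiffDelta_ne_zero dist_le_of_mdiffDelta_ne_zero)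

lemma abs_sub_mdiffDelta_le_left (hsep : 2 * dist x x₀ ≤ dist y x₀) :
    |mdiffDelta c k x y - mdiffDelta c k x₀ y| ≤ kernelBound N (dist x₀ y) k :=
  abs_sub_le_kernelBound (abs_mdiffDelta_le ..) (abs_mdiffDelta_le ..) fun h =>
    dist_le_two_zpow_succ hsep <| h.imp (fun h => dist_comm x y ▸ dist_le_of_mdiffDelta_ne_zero h)
      (fun h => dist_comm x₀ y ▸ dist_le_of_mdiffDelta_ne_zero h)

end MartingaleDifference

def digitSum (v : ℝ) (K : ℕ) : ℕ :=
  ∑ j ∈ Finset.range K, if ⌊v * 2 ^ (j + 1)⌋ % 2 = 1 then 2 ^ j else 0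

lemma digitSum_succ (v : ℝ) (K : ℕ) :
    digitSum v (K + 1) = digitSum v K + if ⌊v * 2 ^ (K + 1)⌋ % 2 = 1 then 2 ^ K else 0 :=
  Finset.sum_range_succ ..

lemma digitSum_lt_two_pow (v : ℝ) (K : ℕ) : digitSum v K < 2 ^ K := by
  induction K with
  | zero => simp [digitSum]
  | succ K ih =>
    rw [digitSum_succ, pow_succ]
    split_ifs <;> omega

lemma randOffset1_eq_sub_digitSum (u v : ℝ) (k : ℤ) :
    randOffset1 u v k = u - 1 - digitSum v k.toNat := by
  simp only [randOffset1, digitSum, Nat.cast_sum, Nat.cast_ite, Nat.cast_pow, Nat.cast_ofNat,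
    Nat.cast_zero]

lemma floor_mul_two_pow_eq_of_digitSum_eq {v w : ℝ} (hv : v ∈ Ico (0 : ℝ) 1)
    (hw : w ∈ Ico (0 : ℝ) 1) {K : ℕ} (h : digitSum v K = digitSum w K) :
    ⌊v * 2 ^ K⌋ = ⌊w * 2 ^ K⌋ := by
  induction K with
  | zero => simp [Int.floor_eq_zero_iff.2 hv, Int.floor_eq_zero_iff.2 hw]
  | succ K ih =>
    have hv' := digitSum_lt_two_pow v K
    have hw' := digitSum_lt_two_pow w K
    have halve : ∀ z : ℝ, ⌊z * 2 ^ K⌋ = ⌊z * 2 ^ (K + 1)⌋ / 2 := fun z => by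
      have := Int.floor_div_natCast (z * 2 ^ (K + 1)) 2
      rwa [Nat.cast_ofNat, Nat.cast_ofNat, pow_succ, ← mul_assoc,
        mul_div_cancel_right₀ _ two_ne_zero, mul_assoc, ← pow_succ] at this
    rw [digitSum_succ, digitSum_succ] at h
    have hK := halve v ▸ halve w ▸ ih
    split_ifs at h <;> omega

lemma volume_digitSum_eq_le (K s : ℕ) :
    volume ({v : ℝ | digitSum v K = s} ∩ Ico 0 1) ≤ ENNReal.ofReal (2 ^ K)⁻¹ := by
  rcases eq_empty_or_nonempty ({v : ℝ | digitSum v K = s} ∩ Ico 0 1) with he | ⟨v₀, hs₀, hv₀⟩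
  · simp [he]
  set n := ⌊v₀ * 2 ^ K⌋
  have hpos : (0 : ℝ) < 2 ^ K := by positivity
  have hsub : {v : ℝ | digitSum v K = s} ∩ Ico 0 1 ⊆ Ico (n / 2 ^ K) ((n + 1) / 2 ^ K) := by
    rintro v ⟨hs, hv⟩
    have hn : ⌊v * 2 ^ K⌋ = n := floor_mul_two_pow_eq_of_digitSum_eq hv hv₀ (hs.trans hs₀.symm)
    rw [mem_Ico, div_le_iff₀ hpos, lt_div_iff₀ hpos, ← hn]
    exact ⟨Int.floor_le _, Int.lt_floor_add_one _⟩
  calc volume _ ≤ volume (Ico ((n : ℝ) / 2 ^ K) ((n + 1) / 2 ^ K)) := measure_mono hsub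
    _ = ENNReal.ofReal (2 ^ K)⁻¹ := by rw [Real.volume_Ico]; ring_nf

lemma randOffset_isNested {N : ℕ} (ω : RSpace N) : IsNested (randOffset ω) := by
  intro k i
  simp only [randOffset, randOffset1_eq_sub_digitSum]
  rcases le_or_gt k 0 with hk | hk
  · exact ⟨0, by simp [Int.toNat_of_nonpos hk, Int.toNat_of_nonpos (by omega : k - 1 ≤ 0)]⟩
  · obtain ⟨K, hK⟩ : ∃ K : ℕ, (k - 1).toNat = K ∧ k.toNat = K + 1 := ⟨_, rfl, by omega⟩
    have hzpow : (2 : ℝ) ^ (k - 1) = 2 ^ K := by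
      rw [← zpow_natCast, ← hK.1, Int.toNat_of_nonneg (by omega)]
    refine ⟨if ⌊(ω i).2 * 2 ^ (K + 1)⌋ % 2 = 1 then -1 else 0, ?_⟩
    rw [hK.1, hK.2, digitSum_succ, hzpow]
    split_ifs <;> push_cast <;> ring

def randMeasure1 : Measure (ℝ × ℝ) :=
  (volume.restrict (Ico (0 : ℝ) 1)).prod (volume.restrict (Ico (0 : ℝ) 1))

instance : IsProbabilityMeasure (volume.restrict (Ico (0 : ℝ) 1)) := ⟨by simp⟩

def sepSet (k : ℤ) (a b : ℝ) : Set (ℝ × ℝ) :=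
  {p | ⌊(a - randOffset1 p.1 p.2 k) / 2 ^ k⌋ ≠ ⌊(b - randOffset1 p.1 p.2 k) / 2 ^ k⌋}

/-- Given the digit sum `s = digitSum v K` (`K = k.toNat`), the grid is `u - 1 - s + 2^k ℤ`
with `u` uniform on `[0, 1)`; each of the `2^K` values of `s` has probability `≤ 2^(-K)`, and
as `s` varies these grids sweep out `u - 1 + 2^(k-K) ℤ`. -/
lemma randMeasure1_sepSet_le_of_le (k : ℤ) {a b : ℝ} (hab : a ≤ b) :
    randMeasure1 (sepSet k a b) ≤ ENNReal.ofReal (3 * (b - a) / 2 ^ k) := by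
  set K := k.toNat
  set q : ℝ := 2 ^ (k - K)
  set e := (Int.divModEquiv (2 ^ K)).symm
  have hq : 0 < q := by positivity
  have hq1 : q ≤ 1 := zpow_le_one_of_nonpos₀ one_le_two (by omega)
  have hKq : (2 : ℝ) ^ K * q = 2 ^ k := by
    rw [← zpow_natCast, ← zpow_add₀ two_ne_zero, add_sub_cancel]
  have hidx : ∀ p : ℤ × Fin (2 ^ K), (e p : ℝ) * q = p.1 * 2 ^ k + (p.2 : ℕ) := by
    rintro ⟨m, s⟩
    rw [Int.divModEquiv_symm_apply]
    rcases le_or_gt 0 k with hk | hk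
    · have hq1 : q = 1 := by simp [q, K, Int.toNat_of_nonneg hk]
      rw [← hKq, hq1]
      push_cast
      ring
    · have hK : K = 0 := Int.toNat_of_nonpos hk.le
      have hs : (s : ℕ) = 0 := by have := s.2; simp only [hK, pow_zero] at this; omega
      rw [← hKq]
      push_cast
      simp [hK, hs]
  set I : ℤ → Set ℝ := fun n => Ioc (a + 1 + n * q) (a + 1 + n * q + (b - a))
  have hcover : sepSet k a b ⊆ ⋃ p, I (e p) ×ˢ {v | digitSum v K = p.2} := by
    rintro ⟨u, v⟩ hp
    have h2k : (0 : ℝ) < 2 ^ k := by positivity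
    have hlt := lt_of_le_of_ne (Int.floor_le_floor (by gcongr)) hp
    have h1 := (div_lt_iff₀ h2k).1 (Int.floor_lt.1 hlt)
    have h2 := (le_div_iff₀ h2k).1 (Int.floor_le ((b - randOffset1 u v k) / 2 ^ k))
    refine mem_iUnion.2 ⟨(-⌊(b - randOffset1 u v k) / 2 ^ k⌋,
      ⟨digitSum v K, digitSum_lt_two_pow v K⟩), ⟨?_, ?_⟩, rfl⟩ <;>
    simp only [hidx, randOffset1_eq_sub_digitSum] at h1 h2 ⊢ <;> push_cast <;> linarith
  have hrect : ∀ p, randMeasure1 (I (e p) ×ˢ {v | digitSum v K = p.2}) ≤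
      ENNReal.ofReal (2 ^ K)⁻¹ * volume (I (e p) ∩ Ico 0 1) := by
    intro p
    rw [randMeasure1, Measure.prod_prod, Measure.restrict_apply' measurableSet_Ico,
      Measure.restrict_apply' measurableSet_Ico, mul_comm]
    gcongr
    exact volume_digitSum_eq_le K _
  calc _ ≤ ∑' p, randMeasure1 (I (e p) ×ˢ {v | digitSum v K = p.2}) :=
        (measure_mono hcover).trans (measure_iUnion_le _)
    _ ≤ ∑' p, ENNReal.ofReal (2 ^ K)⁻¹ * volume (I (e p) ∩ Ico 0 1) := ENNReal.tsum_le_tsum hrect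
    _ = ENNReal.ofReal (2 ^ K)⁻¹ * ∑' n, volume (I n ∩ Ico 0 1) := by
        rw [ENNReal.tsum_mul_left, e.tsum_eq fun n => volume (I n ∩ Ico 0 1)]
    _ ≤ ENNReal.ofReal (2 ^ K)⁻¹ * ENNReal.ofReal (3 * (b - a) / q) := by
        gcongr
        exact tsum_volume_Ioc_inter_Ico_le hq hq1 (by linarith)
    _ = ENNReal.ofReal (3 * (b - a) / 2 ^ k) := by
        rw [← ENNReal.ofReal_mul (by positivity), ← hKq]
        field_simp

lemma randMeasure1_sepSet_le (k : ℤ) (a b : ℝ) :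
    randMeasure1 (sepSet k a b) ≤ ENNReal.ofReal (3 * |a - b| / 2 ^ k) := by
  rcases le_total a b with hab | hab
  · rw [abs_sub_comm, abs_of_nonneg (sub_nonneg.2 hab)]
    exact randMeasure1_sepSet_le_of_le k hab
  · rw [abs_of_nonneg (sub_nonneg.2 hab), show sepSet k a b = sepSet k b a from
      Set.ext fun _ => ne_comm]
    exact randMeasure1_sepSet_le_of_le k hab

lemma randMeasure_eval_preimage {N : ℕ} (i : Fin N) (A : Set (ℝ × ℝ)) :
    randMeasure N (Function.eval i ⁻¹' A) = randMeasure1 A := by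
  rw [← singleton_pi i (fun _ => A), ← Finset.coe_singleton, randMeasure, Measure.pi_pi_finset,
    Finset.prod_singleton]
  rfl

lemma randMeasure_notMem_dcube_le {N : ℕ} (x x₀ : Fin N → ℝ) (k : ℤ) :
    randMeasure N {ω | x₀ ∉ dcube (randOffset ω k) k x} ≤
      ENNReal.ofReal (3 * N * dist x x₀ / 2 ^ k) := by
  have hsub : {ω | x₀ ∉ dcube (randOffset ω k) k x} ⊆
      ⋃ i, Function.eval i ⁻¹' sepSet k (x₀ i) (x i) := by
    intro ω hω
    simpa [dcube, randOffset, sepSet] using hω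
  have hcoord : ∀ i, randMeasure1 (sepSet k (x₀ i) (x i)) ≤
      ENNReal.ofReal (3 * dist x x₀ / 2 ^ k) := fun i =>
    (randMeasure1_sepSet_le k _ _).trans <| ENNReal.ofReal_le_ofReal <| by
      rw [← Real.dist_eq, dist_comm]
      gcongr
      exact dist_le_pi_dist x x₀ i
  calc _ ≤ ∑ i, randMeasure N (Function.eval i ⁻¹' sepSet k (x₀ i) (x i)) :=
        (measure_mono hsub).trans (measure_iUnion_fintype_le _ _)
    _ ≤ ∑ _i : Fin N, ENNReal.ofReal (3 * dist x x₀ / 2 ^ k) :=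
        Finset.sum_le_sum fun i _ => (randMeasure_eval_preimage i _).trans_le (hcoord i)
    _ = ENNReal.ofReal (3 * N * dist x x₀ / 2 ^ k) := by
        rw [Finset.sum_const, Finset.card_univ, Fintype.card_fin, nsmul_eq_mul,
          ← ENNReal.ofReal_natCast, ← ENNReal.ofReal_mul (Nat.cast_nonneg N)]
        congr 1
        ring

lemma tsum_kernelBound_sq_mul_le {N : ℕ} {R d : ℝ} (hR : 0 < R) (hd : 0 ≤ d) :
    ∑' k : ℤ, ENNReal.ofReal (kernelBound N R k ^ 2) * ENNReal.ofReal (3 * N * d / 2 ^ (k - 1)) ≤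
      ENNReal.ofReal (24 * N * 4 ^ (2 * N + 1) * d / R ^ (2 * N + 1)) := by
  set g : ℤ → ℝ := fun j => if R / 4 ≤ 2 ^ j then ((2 : ℝ) ^ j)⁻¹ ^ (2 * N + 1) else 0
  have hterm : ∀ k : ℤ, ENNReal.ofReal (kernelBound N R k ^ 2) *
      ENNReal.ofReal (3 * N * d / 2 ^ (k - 1)) =
        ENNReal.ofReal (12 * N * d) * ENNReal.ofReal (g (k - 1)) := by
    intro k
    have hcond : R ≤ 2 ^ (k + 1) ↔ R / 4 ≤ 2 ^ (k - 1) := by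
      rw [show k + 1 = k - 1 + 2 by ring, zpow_add₀ two_ne_zero, div_le_iff₀ four_pos]
      norm_num
    rw [← ENNReal.ofReal_mul (sq_nonneg _), ← ENNReal.ofReal_mul (by positivity)]
    simp only [kernelBound, g, hcond]
    split_ifs
    · congr 1
      ring
    · simp
  calc _ = ∑' k : ℤ, ENNReal.ofReal (12 * N * d) * ENNReal.ofReal (g (k - 1)) := tsum_congr hterm
    _ = ENNReal.ofReal (12 * N * d) * ∑' j : ℤ, ENNReal.ofReal (g j) := by
        rw [ENNReal.tsum_mul_left]
        exact congrArg _ ((Equiv.subRight (1 : ℤ)).tsum_eq fun j => ENNReal.ofReal (g j))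
    _ ≤ ENNReal.ofReal (12 * N * d) * ENNReal.ofReal (2 / (R / 4) ^ (2 * N + 1)) := by
        gcongr
        exact tsum_ofReal_zpow_inv_pow_le (by positivity) (by omega)
    _ = ENNReal.ofReal (24 * N * 4 ^ (2 * N + 1) * d / R ^ (2 * N + 1)) := by
        rw [← ENNReal.ofReal_mul (by positivity)]
        congr 1
        rw [div_pow, div_div_eq_mul_div]
        ring

lemma lintegral_tsum_sq_le_of_le_kernelBound {N : ℕ} {x x₀ y : Fin N → ℝ} (hd : 0 < dist x x₀)
    (hsep : 2 * dist x x₀ ≤ dist y x₀) (f : RSpace N → ℤ → ℝ)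
    (hf₀ : ∀ ω k, x₀ ∈ dcube (randOffset ω (k - 1)) (k - 1) x → f ω k = 0)
    (hf : ∀ ω k, |f ω k| ≤ kernelBound N (dist x₀ y) k) :
    ∫⁻ ω, ∑' k, ENNReal.ofReal (f ω k ^ 2) ∂randMeasure N ≤
      ENNReal.ofReal (24 * N * 4 ^ (2 * N + 1) * dist x x₀ / dist x₀ y ^ (2 * N + 1)) := by
  have hR : 0 < dist x₀ y := by rw [dist_comm]; linarith
  calc _ ≤ ∑' k : ℤ, ENNReal.ofReal (kernelBound N (dist x₀ y) k ^ 2) *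
        randMeasure N {ω | x₀ ∉ dcube (randOffset ω (k - 1)) (k - 1) x} :=
        lintegral_tsum_ofReal_sq_le _ (fun ω k h => hf₀ ω k (not_not.1 h)) hf
    _ ≤ ∑' k : ℤ, ENNReal.ofReal (kernelBound N (dist x₀ y) k ^ 2) *
        ENNReal.ofReal (3 * N * dist x x₀ / 2 ^ (k - 1)) :=
        ENNReal.tsum_le_tsum fun k => by gcongr; exact randMeasure_notMem_dcube_le x x₀ (k - 1)
    _ ≤ _ := tsum_kernelBound_sq_mul_le hR dist_nonneg

/-- **Calderón–Zygmund smoothness estimate (exponent δ = 1/2) for the random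
square-function kernel and its transpose**: if `|y-x₀| ≥ 2|x-x₀| > 0` then
`𝔼_ω ∑_k |Δ_k^{𝒟(ω)} δ_y(x) - Δ_k^{𝒟(ω)} δ_y(x₀)|² ≤ C(N) |x-x₀| |x₀-y|^{-2N-1}`, and the
same bound holds for the transposed kernel. -/
theorem kernel_smoothness (N : ℕ) (hN : 0 < N) :
    ∃ C : ℝ, 0 < C ∧
      ∀ x x₀ y : Fin N → ℝ, 0 < dist x x₀ → 2 * dist x x₀ ≤ dist y x₀ →
        ((∫⁻ ω, (∑' k : ℤ, ENNReal.ofReal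
              ((mdiffDelta (randOffset ω) k y x - mdiffDelta (randOffset ω) k y x₀) ^ 2))
              ∂randMeasure N) ≤
            ENNReal.ofReal (C * dist x x₀ / dist x₀ y ^ (2 * N + 1))) ∧
        ((∫⁻ ω, (∑' k : ℤ, ENNReal.ofReal
              ((mdiffDelta (randOffset ω) k x y - mdiffDelta (randOffset ω) k x₀ y) ^ 2))
              ∂randMeasure N) ≤
            ENNReal.ofReal (C * dist x x₀ / dist x₀ y ^ (2 * N + 1))) := by
  have hN' : (0 : ℝ) < N := Nat.cast_pos.2 hN
  refine ⟨24 * N * 4 ^ (2 * N + 1), by positivity, fun x x₀ y hd hsep => ⟨?_, ?_⟩⟩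
  · refine lintegral_tsum_sq_le_of_le_kernelBound hd hsep _ (fun ω k h => ?_)
      fun ω k => abs_sub_mdiffDelta_le_right hsep
    rw [mdiffDelta_eq_of_mem_dcube_right (randOffset_isNested ω) h, sub_self]
  · refine lintegral_tsum_sq_le_of_le_kernelBound hd hsep _ (fun ω k h => ?_)
      fun ω k => abs_sub_mdiffDelta_le_left hsep
    rw [mdiffDelta_eq_of_mem_dcube_left (randOffset_isNested ω) h, sub_self]

end Treil
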